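/- Let (M,d) be a cone metric space over a real Banach space E with a normal cone P with normal constant K, and let (xₙ) be a sequence in M. Then (xₙ) converges to x ∈ M (in the cone-metric sense) if and only if ‖d(xₙ, x)‖ → 0 as n → ∞. -/

import Mathlib

open Filter

/-- `P` is a cone in the real Banach space `E`: nonempty, closed, not `{0}`,
closed under nonnegative linear combinations, and `P ∩ (-P) = {0}`. -/
def IsCone {E : Type*} [NormedAddCommGroup E] [NormedSpace ℝ E] (P : Set E) : Prop :=
  P.Nonempty ∧ IsClosed P ∧ P ≠ {0} ∧
    (∀ (a b : ℝ), 0 ≤ a → 0 ≤ b → ∀ x ∈ P, ∀ y ∈ P, a • x + b • y ∈ P) ∧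
    (∀ x ∈ P, -x ∈ P → x = 0)

/-- The partial order induced by the cone `P`: `x ≤ y` iff `y - x ∈ P`. -/
def ConeLe {E : Type*} [NormedAddCommGroup E] (P : Set E) (x y : E) : Prop :=
  y - x ∈ P

/-- The strict order induced by the cone `P`: `x ≪ y` iff `y - x ∈ interior P`. -/
def ConeLt {E : Type*} [NormedAddCommGroup E] (P : Set E) (x y : E) : Prop :=
  y - x ∈ interior P

/-- `P` is a normal cone with normal constant `K`:
`K > 0` and `0 ≤ x ≤ y` implies `‖x‖ ≤ K * ‖y‖`. -/
def IsNormalCone {E : Type*} [NormedAddCommGroup E] (P : Set E) (K : ℝ) : Prop :=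
  0 < K ∧ ∀ x y : E, ConeLe P 0 x → ConeLe P x y → ‖x‖ ≤ K * ‖y‖

/-- `d` is a cone metric on `M` with respect to the cone `P ⊆ E`. -/
def IsConeMetric {E : Type*} [NormedAddCommGroup E] (P : Set E) {M : Type*}
    (d : M → M → E) : Prop :=
  (∀ x y : M, x ≠ y → ConeLe P 0 (d x y) ∧ d x y ≠ 0) ∧
  (∀ x y : M, d x y = 0 ↔ x = y) ∧
  (∀ x y : M, d x y = d y x) ∧
  (∀ x y z : M, ConeLe P (d x y) (d x z + d z y))

/-- Convergence of a sequence in a cone metric space: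
for every `c` with `0 ≪ c` eventually `d (s n) l ≪ c`. -/
def ConeConverges {E : Type*} [NormedAddCommGroup E] (P : Set E) {M : Type*}
    (d : M → M → E) (s : ℕ → M) (l : M) : Prop :=
  ∀ c : E, ConeLt P 0 c → ∃ n₀ : ℕ, ∀ n ≥ n₀, ConeLt P (d (s n) l) c

/-- Cauchy sequences in a cone metric space. -/
def ConeCauchy {E : Type*} [NormedAddCommGroup E] (P : Set E) {M : Type*}
    (d : M → M → E) (s : ℕ → M) : Prop :=
  ∀ c : E, ConeLt P 0 c → ∃ n₀ : ℕ, ∀ n ≥ n₀, ∀ m ≥ n₀, ConeLt P (d (s n) (s m)) c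

/-- The cone metric space `(M, d)` is complete: every Cauchy sequence converges. -/
def ConeComplete {E : Type*} [NormedAddCommGroup E] (P : Set E) {M : Type*}
    (d : M → M → E) : Prop :=
  ∀ s : ℕ → M, ConeCauchy P d s → ∃ l : M, ConeConverges P d s l

/-- The cone metric space `(M, d)` is sequentially compact:
every sequence has a convergent subsequence. -/
def ConeSeqCompact {E : Type*} [NormedAddCommGroup E] (P : Set E) {M : Type*}
    (d : M → M → E) : Prop :=
  ∀ s : ℕ → M, ∃ φ : ℕ → ℕ, StrictMono φ ∧ ∃ l : M, ConeConverges P d (fun i => s (φ i)) l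

/-- `T : M → M` is continuous for the cone metric `d`: it preserves convergent sequences. -/
def ConeContinuousMap {E : Type*} [NormedAddCommGroup E] (P : Set E) {M : Type*}
    (d : M → M → E) (T : M → M) : Prop :=
  ∀ (s : ℕ → M) (l : M), ConeConverges P d s l → ConeConverges P d (fun n => T (s n)) (T l)

/-- `T` is sequentially convergent: if `(T yₙ)` converges then `(yₙ)` converges. -/
def ConeSeqConvergent {E : Type*} [NormedAddCommGroup E] (P : Set E) {M : Type*}
    (d : M → M → E) (T : M → M) : Prop :=
  ∀ s : ℕ → M, (∃ l : M, ConeConverges P d (fun n => T (s n)) l) →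
    ∃ l : M, ConeConverges P d s l

/-- `T` is subsequentially convergent: if `(T yₙ)` converges then `(yₙ)` has a
convergent subsequence. -/
def ConeSubseqConvergent {E : Type*} [NormedAddCommGroup E] (P : Set E) {M : Type*}
    (d : M → M → E) (T : M → M) : Prop :=
  ∀ s : ℕ → M, (∃ l : M, ConeConverges P d (fun n => T (s n)) l) →
    ∃ φ : ℕ → ℕ, StrictMono φ ∧ ∃ l : M, ConeConverges P d (fun i => s (φ i)) l

/-! For a normal cone, `0 ≤ d ≪ c` forces `‖d‖ ≤ K ‖c‖`, and the interior of the cone contains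
points `c` of arbitrarily small norm (positive multiples of one interior point), so cone convergence
gives norm convergence. Conversely, if `dₙ → 0` in norm then `c - dₙ → c`, which eventually lies in
the open set `interior P`. -/

open Topology

namespace IsCone

variable {E : Type*} [NormedAddCommGroup E] [NormedSpace ℝ E] {P : Set E}

theorem smul_mem (hP : IsCone P) {t : ℝ} (ht : 0 ≤ t) {x : E} (hx : x ∈ P) : t • x ∈ P := by
  simpa using hP.2.2.2.1 t 0 ht le_rfl x hx x hx

theorem zero_mem (hP : IsCone P) : (0 : E) ∈ P := by
  obtain ⟨x, hx⟩ := hP.1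
  simpa using hP.smul_mem le_rfl hx

open Pointwise in
theorem smul_mem_interior (hP : IsCone P) {t : ℝ} (ht : 0 < t) {c : E}
    (hc : c ∈ interior P) : t • c ∈ interior P := by
  have hsub : t • P ⊆ P := by
    rintro _ ⟨x, hx, rfl⟩
    exact hP.smul_mem ht.le hx
  exact interior_mono hsub ((interior_smul₀ ht.ne' P).symm ▸ Set.smul_mem_smul_set hc)

theorem exists_mem_interior_norm_lt (hP : IsCone P) (hPint : (interior P).Nonempty) {ε : ℝ}
    (hε : 0 < ε) : ∃ c ∈ interior P, ‖c‖ < ε := by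
  obtain ⟨c, hc⟩ := hPint
  have hlim : Tendsto (fun t : ℝ => t • c) (𝓝[>] 0) (𝓝 0) := by
    simpa using (tendsto_id.smul_const c).mono_left (nhdsWithin_le_nhds (a := (0 : ℝ)))
  obtain ⟨t, hsmall, ht⟩ :=
    ((hlim.eventually (Metric.ball_mem_nhds 0 hε)).and self_mem_nhdsWithin).exists
  exact ⟨t • c, hP.smul_mem_interior ht hc, by simpa using hsmall⟩

end IsCone

theorem IsConeMetric.zero_coneLe {E : Type*} [NormedAddCommGroup E] [NormedSpace ℝ E]
    {P : Set E} {M : Type*} {d : M → M → E} (hd : IsConeMetric P d) (hP : IsCone P) (x y : M) :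
    ConeLe P 0 (d x y) := by
  by_cases h : x = y
  · simpa [ConeLe, (hd.2.1 x y).2 h] using hP.zero_mem
  · exact (hd.1 x y h).1

section Convergence

variable {E : Type*} [NormedAddCommGroup E] {P : Set E} {ι : Type*} {l : Filter ι} {f : ι → E}

theorem eventually_coneLt_of_tendsto_zero (hf : Tendsto f l (𝓝 0)) {c : E}
    (hc : ConeLt P 0 c) : ∀ᶠ i in l, ConeLt P (f i) c := by
  have hlim : Tendsto (fun i => c - f i) l (𝓝 c) := by
    simpa using tendsto_const_nhds.sub hf
  exact hlim.eventually_mem (isOpen_interior.mem_nhds (by simpa [ConeLt] using hc))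

theorem tendsto_zero_of_eventually_coneLt [NormedSpace ℝ E] {K : ℝ} (hP : IsCone P)
    (hPint : (interior P).Nonempty) (hK : IsNormalCone P K) (hf0 : ∀ i, ConeLe P 0 (f i))
    (hf : ∀ c, ConeLt P 0 c → ∀ᶠ i in l, ConeLt P (f i) c) : Tendsto f l (𝓝 0) := by
  refine Metric.tendsto_nhds.2 fun ε hε => ?_
  obtain ⟨c, hc, hcε⟩ := hP.exists_mem_interior_norm_lt hPint (div_pos hε hK.1)
  filter_upwards [hf c (by simpa [ConeLt] using hc)] with i hi
  calc dist (f i) 0 = ‖f i‖ := dist_zero_right _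
    _ ≤ K * ‖c‖ := hK.2 _ _ (hf0 i) (interior_subset hi)
    _ < ε := by rwa [lt_div_iff₀' hK.1] at hcε

end Convergence

theorem stmt13
    {E : Type*} [NormedAddCommGroup E] [NormedSpace ℝ E]
    {M : Type*} (P : Set E) (hP : IsCone P) (hPint : (interior P).Nonempty)
    (K : ℝ) (hK : IsNormalCone P K)
    (d : M → M → E) (hd : IsConeMetric P d)
    (s : ℕ → M) (x : M) :
    ConeConverges P d s x ↔ Tendsto (fun n => ‖d (s n) x‖) atTop (nhds 0) := by
  rw [← tendsto_zero_iff_norm_tendsto_zero]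
  constructor
  · intro hconv
    exact tendsto_zero_of_eventually_coneLt hP hPint hK (fun n => hd.zero_coneLe hP (s n) x)
      fun c hc => eventually_atTop.2 (hconv c hc)
  · intro hlim c hc
    exact eventually_atTop.1 (eventually_coneLt_of_tendsto_zero hlim hc)
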